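/- arXiv:2106.02748 — 2 statements merged into one kernel-verified Lean document; each statement's English description precedes it below -/
import Mathlib

section
/- For step sizes α_c = c^{-ρ_α} and β_c = c^{-ρ_β} with 1/2 < ρ_α < ρ_β ≤ 1, and any M ∈ (0,1), define M_o = M^{-ρ_β/(ρ_β-ρ_α)} and let m be a positive integer with m ≥ 1/(ρ_β-ρ_α). Then for every λ ∈ (0,1) and every positive integer c ≥ M_o λ^{-m}, any positive integer ℓ ≤ c satisfying β_ℓ/α_c > λ must satisfy ℓ ≤ M·c. -/
/-!
Suppose `ℓ > M c`. Then `β_ℓ / α_c = c^ρa / ℓ^ρb < M^(-ρb) c^(-(ρb - ρa))`, and the threshold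
`c ≥ M^(-ρb/(ρb-ρa)) λ^(-m)` is chosen exactly so that this is at most `M^(-ρb) · M^ρb λ^(m(ρb-ρa)) ≤ λ`,
using `m (ρb - ρa) ≥ 1` and `λ ≤ 1`.
-/

open Real

lemma rpow_neg_div_rpow_neg_le {x y M a b : ℝ} (hx : 0 < x) (hM : 0 < M) (hb : 0 ≤ b)
    (hxy : M * x ≤ y) : y ^ (-b) / x ^ (-a) ≤ M ^ (-b) * x ^ (-(b - a)) :=
  calc y ^ (-b) / x ^ (-a) ≤ (M * x) ^ (-b) / x ^ (-a) :=
        div_le_div_of_nonneg_right (rpow_le_rpow_of_nonpos (by positivity) hxy (by linarith))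
          (by positivity)
    _ = M ^ (-b) * x ^ (-(b - a)) := by
        rw [mul_rpow hM.le hx.le, mul_div_assoc, ← rpow_sub hx, neg_sub_neg, neg_sub]

lemma rpow_neg_mul_rpow_neg_le {M lam x b d m : ℝ} (hM : 0 < M) (hlam0 : 0 < lam)
    (hlam1 : lam ≤ 1) (hd : 0 < d) (hmd : 1 ≤ m * d)
    (hx : M ^ (-(b / d)) * lam ^ (-m) ≤ x) : M ^ (-b) * x ^ (-d) ≤ lam :=
  calc M ^ (-b) * x ^ (-d) ≤ M ^ (-b) * (M ^ (-(b / d)) * lam ^ (-m)) ^ (-d) :=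
        mul_le_mul_of_nonneg_left (rpow_le_rpow_of_nonpos (by positivity) hx (by linarith))
          (by positivity)
    _ = lam ^ (m * d) := by
        rw [mul_rpow (by positivity) (by positivity), ← rpow_mul hM.le, ← rpow_mul hlam0.le,
          neg_mul_neg, div_mul_cancel₀ b hd.ne', neg_mul_neg, ← mul_assoc, ← rpow_add hM,
          neg_add_cancel, rpow_zero, one_mul]
    _ ≤ lam := by simpa using rpow_le_rpow_of_exponent_ge hlam0 hlam1 hmd

theorem stmt0_general (ρa ρb M M₀ : ℝ) (m : ℕ)
    (hρa : 1/2 < ρa) (hab : ρa < ρb)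
    (hM : M ∈ Set.Ioo (0:ℝ) 1)
    (hM₀ : M₀ = M ^ (-(ρb / (ρb - ρa))))
    (hm : 1 / (ρb - ρa) ≤ (m : ℝ))
    (lam : ℝ) (hlam : lam ∈ Set.Ioo (0:ℝ) 1)
    (c ℓ : ℕ)
    (hcge : M₀ * lam ^ (-(m : ℝ)) ≤ (c : ℝ))
    (h : ((ℓ : ℝ) ^ (-ρb)) / ((c : ℝ) ^ (-ρa)) > lam) :
    (ℓ : ℝ) ≤ M * c := by
  obtain ⟨hM0, -⟩ := hM
  obtain ⟨hlam0, hlam1⟩ := hlam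
  subst hM₀
  have hd : 0 < ρb - ρa := sub_pos.mpr hab
  have hmd : 1 ≤ (m : ℝ) * (ρb - ρa) := by rwa [div_le_iff₀ hd] at hm
  have hc : (0 : ℝ) < c := lt_of_lt_of_le (by positivity) hcge
  by_contra! hℓ
  have hratio := rpow_neg_div_rpow_neg_le (a := ρa) hc hM0 (by linarith : 0 ≤ ρb) hℓ.le
  have hthreshold := rpow_neg_mul_rpow_neg_le hM0 hlam0 hlam1.le hd hmd hcge
  linarith

theorem stmt0 (ρa ρb M M₀ : ℝ) (m : ℕ)
    (hρa : 1/2 < ρa) (hab : ρa < ρb) (hb1 : ρb ≤ 1)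
    (hM : M ∈ Set.Ioo (0:ℝ) 1)
    (hM₀ : M₀ = M ^ (-(ρb / (ρb - ρa))))
    (hm0 : 0 < m) (hm : 1 / (ρb - ρa) ≤ (m : ℝ))
    (lam : ℝ) (hlam : lam ∈ Set.Ioo (0:ℝ) 1)
    (c ℓ : ℕ) (hc : 0 < c) (hℓ : 0 < ℓ)
    (hcge : M₀ * lam ^ (-(m : ℝ)) ≤ (c : ℝ))
    (hℓc : ℓ ≤ c)
    (h : ((ℓ : ℝ) ^ (-ρb)) / ((c : ℝ) ^ (-ρa)) > lam) :
    (ℓ : ℝ) ≤ M * c :=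
  stmt0_general ρa ρb M M₀ m hρa hab hM hM₀ hm lam hlam c ℓ hcge h
end

section
/- Let H(t) = ‖q¹(t) - Q¹π²(t)‖² + ‖q²(t) - Q²π¹(t)‖² along solutions of the coupled flow dq^i/dt = Q^i B̄r^{-i}(q^{-i}(t),τ) - q^i(t), dπ^i/dt = B̄r^i(q^i(t),τ) - π^i(t). Then dH(t)/dt = -2H(t), so H(t) = H(0)e^{-2t} and H(t) → 0 as t → ∞. -/
/-!
Write `e¹ = q¹ - Q¹π²` and `e² = q² - Q²π¹`. In `de¹/dt` the best-response terms cancel: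
`Q¹ B̄r²` enters through `dq¹/dt` and leaves through `Q¹ dπ²/dt`, so `de¹/dt = -e¹`, and
likewise for `e²`. Hence `H = ‖e¹‖² + ‖e²‖²` solves `H' = -2H`, which forces
`H(t) = H(0)e^{-2t}`.
-/

open Finset Filter Real

theorem hasDerivAt_sub_sum_mul_of_relaxation {κ : Type*} [Fintype κ] {q : ℝ → ℝ}
    {p b : ℝ → κ → ℝ} (w : κ → ℝ) {t : ℝ}
    (hq : HasDerivAt q ((∑ k, w k * b t k) - q t) t)
    (hp : ∀ k, HasDerivAt (fun t => p t k) (b t k - p t k) t) :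
    HasDerivAt (fun t => q t - ∑ k, w k * p t k) (-(q t - ∑ k, w k * p t k)) t := by
  have hwp : HasDerivAt (fun t => ∑ k, w k * p t k) (∑ k, w k * (b t k - p t k)) t :=
    HasDerivAt.fun_sum fun k _ => (hp k).const_mul (w k)
  refine (hq.sub hwp).congr_deriv ?_
  simp only [mul_sub, sum_sub_distrib]
  ring

theorem hasDerivAt_sum_sq_of_hasDerivAt_const_mul {ι : Type*} [Fintype ι] {e : ι → ℝ → ℝ}
    {c t : ℝ} (he : ∀ i, HasDerivAt (e i) (c * e i t) t) :
    HasDerivAt (fun t => ∑ i, e i t ^ 2) (2 * c * ∑ i, e i t ^ 2) t := by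
  refine (HasDerivAt.fun_sum fun i _ => (he i).pow 2).congr_deriv ?_
  rw [mul_sum]
  exact sum_congr rfl fun i _ => by ring

theorem eq_mul_exp_of_hasDerivAt_const_mul {f : ℝ → ℝ} {c : ℝ}
    (hf : ∀ t, HasDerivAt f (c * f t) t) (t : ℝ) : f t = f 0 * exp (c * t) := by
  have hg : ∀ s, HasDerivAt (fun s => f s * exp (-c * s)) 0 s := fun s => by
    have hexp : HasDerivAt (fun s => exp (-c * s)) (exp (-c * s) * -c) s :=
      ((hasDerivAt_id s).const_mul (-c)).exp.congr_deriv (by simp)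
    exact ((hf s).mul hexp).congr_deriv (by ring)
  have hconst : f t * exp (-c * t) = f 0 * exp (-c * 0) :=
    is_const_of_deriv_eq_zero (fun s => (hg s).differentiableAt) (fun s => (hg s).deriv) t 0
  calc f t = f t * exp (-c * t) * exp (c * t) := by
        rw [mul_assoc, ← exp_add]; simp
    _ = f 0 * exp (c * t) := by rw [hconst, mul_zero, exp_zero, mul_one]

theorem tendsto_mul_exp_atTop_nhds_zero {c : ℝ} (hc : c < 0) (a : ℝ) :
    Tendsto (fun t => a * exp (c * t)) atTop (nhds 0) := by
  have h : Tendsto (fun t => exp (c * t)) atTop (nhds 0) :=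
    tendsto_exp_atBot.comp (tendsto_id.const_mul_atTop_of_neg hc)
  simpa using h.const_mul a

theorem stmt16_general {A1 A2 : Type*} [Fintype A1] [Fintype A2]
    (Q1 : A1 → A2 → ℝ) (Q2 : A2 → A1 → ℝ)
    (b1 : ℝ → A1 → ℝ) (b2 : ℝ → A2 → ℝ)
    (q1 : ℝ → A1 → ℝ) (q2 : ℝ → A2 → ℝ)
    (π1 : ℝ → A1 → ℝ) (π2 : ℝ → A2 → ℝ)
    (hq1 : ∀ t a, HasDerivAt (fun t => q1 t a)
      ((∑ b, Q1 a b * b2 t b) - q1 t a) t)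
    (hq2 : ∀ t b, HasDerivAt (fun t => q2 t b)
      ((∑ a, Q2 b a * b1 t a) - q2 t b) t)
    (hπ1' : ∀ t a, HasDerivAt (fun t => π1 t a) (b1 t a - π1 t a) t)
    (hπ2' : ∀ t b, HasDerivAt (fun t => π2 t b) (b2 t b - π2 t b) t)
    (H : ℝ → ℝ)
    (hH : ∀ t, H t = ∑ a, (q1 t a - ∑ b, Q1 a b * π2 t b) ^ 2
                   + ∑ b, (q2 t b - ∑ a, Q2 b a * π1 t a) ^ 2) :
    (∀ t, HasDerivAt H (-2 * H t) t) ∧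
    (∀ t, H t = H 0 * Real.exp (-2 * t)) ∧
    Filter.Tendsto H Filter.atTop (nhds 0) := by
  have hH' : ∀ t, HasDerivAt H (-2 * H t) t := fun t => by
    have he1 := hasDerivAt_sum_sq_of_hasDerivAt_const_mul (c := -1) fun a =>
      (hasDerivAt_sub_sum_mul_of_relaxation (Q1 a) (hq1 t a) (hπ2' t)).congr_deriv
        (neg_one_mul _).symm
    have he2 := hasDerivAt_sum_sq_of_hasDerivAt_const_mul (c := -1) fun b =>
      (hasDerivAt_sub_sum_mul_of_relaxation (Q2 b) (hq2 t b) (hπ1' t)).congr_deriv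
        (neg_one_mul _).symm
    rw [hH t, funext hH]
    exact (he1.add he2).congr_deriv (by ring)
  have hexp := eq_mul_exp_of_hasDerivAt_const_mul hH'
  refine ⟨hH', hexp, ?_⟩
  simpa only [← hexp] using tendsto_mul_exp_atTop_nhds_zero (by norm_num : (-2 : ℝ) < 0) (H 0)

theorem stmt16 {A1 A2 : Type*} [Fintype A1] [Fintype A2]
    (Q1 : A1 → A2 → ℝ) (Q2 : A2 → A1 → ℝ) (τ : ℝ) (hτ : 0 < τ)
    (b1 : ℝ → A1 → ℝ) (b2 : ℝ → A2 → ℝ)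
    (q1 : ℝ → A1 → ℝ) (q2 : ℝ → A2 → ℝ)
    (π1 : ℝ → A1 → ℝ) (π2 : ℝ → A2 → ℝ)
    (hb1 : ∀ t, b1 t ∈ stdSimplex ℝ A1) (hb2 : ∀ t, b2 t ∈ stdSimplex ℝ A2)
    (hπ1 : ∀ t, π1 t ∈ stdSimplex ℝ A1) (hπ2 : ∀ t, π2 t ∈ stdSimplex ℝ A2)
    (hq1 : ∀ t a, HasDerivAt (fun t => q1 t a)
      ((∑ b, Q1 a b * b2 t b) - q1 t a) t)
    (hq2 : ∀ t b, HasDerivAt (fun t => q2 t b)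
      ((∑ a, Q2 b a * b1 t a) - q2 t b) t)
    (hπ1' : ∀ t a, HasDerivAt (fun t => π1 t a) (b1 t a - π1 t a) t)
    (hπ2' : ∀ t b, HasDerivAt (fun t => π2 t b) (b2 t b - π2 t b) t)
    (H : ℝ → ℝ)
    (hH : ∀ t, H t = ∑ a, (q1 t a - ∑ b, Q1 a b * π2 t b) ^ 2
                   + ∑ b, (q2 t b - ∑ a, Q2 b a * π1 t a) ^ 2) :
    (∀ t, HasDerivAt H (-2 * H t) t) ∧
    (∀ t, H t = H 0 * Real.exp (-2 * t)) ∧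
    Filter.Tendsto H Filter.atTop (nhds 0) :=
  stmt16_general Q1 Q2 b1 b2 q1 q2 π1 π2 hq1 hq2 hπ1' hπ2' H hH
end
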